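/- arXiv:1804.05615 — 2 statements merged into one kernel-verified Lean document; each statement's English description precedes it below -/
import Mathlib

section
/- Let p₁, p₂ be real numbers with 0 < p₂ < p₁ < 1 and set ρ = log p₁ / log p₂. Let S be a finite set with |S| = n ≥ 1, let q : S → [0,1], and suppose S is partitioned into three sets A, B, C with q(y) ≤ p₁ for all y ∈ B and q(y) ≤ p₂ for all y ∈ C. Let N = |A| and assume 1 ≤ N ≤ n, and set k* = ⌈log(n/N) / log(1/p₂)⌉. Then (1/p₁^{k*})·(1 + Σ_{y ∈ S} q(y)^{k*}) ≤ (1/p₁)·(n/N)^ρ·(1 + 2N) + |B|. -/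
/-!
At level `k = ⌈log_{1/p₂}(n/N)⌉` every far point has `q(y)^k ≤ p₂^k ≤ N/n`, so the far points
contribute at most `N` to the sum; the near points contribute at most `N`, and the `c`-near
points at most `|B| p₁^k`, which the prefactor `1/p₁^k` turns into `|B|`. Rounding `k` up costs
at most one factor `1/p₁` against `(1/p₁)^{log_{1/p₂}(n/N)} = (n/N)^ρ`.
-/

open Finset Real

lemma Finset.sum_union_le_of_nonneg {ι : Type*} [DecidableEq ι] {s t : Finset ι} {f : ι → ℝ}
    (hf : ∀ i ∈ s ∪ t, 0 ≤ f i) : ∑ i ∈ s ∪ t, f i ≤ ∑ i ∈ s, f i + ∑ i ∈ t, f i := by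
  rw [← sum_union_inter]
  exact le_add_of_nonneg_right <| sum_nonneg fun i hi ↦ hf i (inter_subset_union hi)

lemma Finset.sum_le_card_mul_add_of_union_eq {ι : Type*} [DecidableEq ι] {S A B C : Finset ι}
    {f : ι → ℝ} {a b c : ℝ}
    (hS : A ∪ B ∪ C = S) (hf : ∀ i ∈ S, 0 ≤ f i)
    (ha : ∀ i ∈ A, f i ≤ a) (hb : ∀ i ∈ B, f i ≤ b) (hc : ∀ i ∈ C, f i ≤ c) :
    ∑ i ∈ S, f i ≤ #A * a + #B * b + #C * c := by
  subst hS
  have hAB : ∀ i ∈ A ∪ B, 0 ≤ f i := fun i hi ↦ hf i (subset_union_left hi)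
  calc ∑ i ∈ A ∪ B ∪ C, f i ≤ ∑ i ∈ A, f i + ∑ i ∈ B, f i + ∑ i ∈ C, f i := by
        grw [sum_union_le_of_nonneg hf, sum_union_le_of_nonneg hAB]
    _ ≤ #A * a + #B * b + #C * c := by
        gcongr <;> exact (sum_le_card_nsmul _ _ _ ‹_›).trans_eq (nsmul_eq_mul _ _)

lemma Real.rpow_logb_comm {a b r : ℝ} (ha : 0 < a) (hr : 0 < r) :
    a ^ logb b r = r ^ logb b a := by
  rw [rpow_def_of_pos ha, rpow_def_of_pos hr, logb, logb]
  ring_nf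

lemma Real.le_pow_natCeil_logb {b r : ℝ} (hb : 1 < b) (hr : 0 < r) :
    r ≤ b ^ ⌈logb b r⌉₊ := by
  rw [← rpow_natCast, ← logb_le_iff_le_rpow hb hr]
  exact Nat.le_ceil _

lemma Real.pow_natCeil_logb_le {a b r : ℝ} (ha : 1 ≤ a) (hb : 1 < b) (hr : 1 ≤ r) :
    a ^ ⌈logb b r⌉₊ ≤ a * r ^ logb b a := by
  have hk : (⌈logb b r⌉₊ : ℝ) ≤ logb b r + 1 := (Nat.ceil_lt_add_one (logb_nonneg hb hr)).le
  calc a ^ ⌈logb b r⌉₊ = a ^ (⌈logb b r⌉₊ : ℝ) := (rpow_natCast _ _).symm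
    _ ≤ a ^ (logb b r + 1) := rpow_le_rpow_of_exponent_le ha hk
    _ = a * r ^ logb b a := by
      rw [rpow_add_one (by positivity), rpow_logb_comm (by positivity) (by positivity), mul_comm]

theorem output_sensitive_level_bound_general {α : Type*} [DecidableEq α]
    (p₁ p₂ : ℝ) (hp₂ : 0 < p₂) (hp₁₂ : p₂ < p₁) (hp₁ : p₁ < 1)
    (ρ : ℝ) (hρ : ρ = Real.log p₁ / Real.log p₂)
    (S A B C : Finset α) (q : α → ℝ)
    (hq0 : ∀ y ∈ S, 0 ≤ q y) (hq1 : ∀ y ∈ S, q y ≤ 1)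
    (hpart : A ∪ B ∪ C = S)
    (hB : ∀ y ∈ B, q y ≤ p₁) (hC : ∀ y ∈ C, q y ≤ p₂)
    (hA : 1 ≤ A.card) (hAS : A.card ≤ S.card)
    (k : ℕ)
    (hk : k = ⌈Real.log ((S.card : ℝ) / (A.card : ℝ)) / Real.log (1 / p₂)⌉₊) :
    (1 / p₁ ^ k) * (1 + ∑ y ∈ S, q y ^ k) ≤
      (1 / p₁) * ((S.card : ℝ) / (A.card : ℝ)) ^ ρ * (1 + 2 * (A.card : ℝ))
        + (B.card : ℝ) := by
  set n : ℝ := (#S : ℝ)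
  set N : ℝ := (#A : ℝ)
  have hp₁0 : 0 < p₁ := hp₂.trans hp₁₂
  have hN : 0 < N := by positivity
  have hnN : 1 ≤ n / N := (one_le_div hN).mpr (Nat.cast_le.mpr hAS)
  have hb : 1 < p₂⁻¹ := (one_lt_inv₀ hp₂).mpr (hp₁₂.trans hp₁)
  rw [one_div, log_div_log] at hk
  have hρ' : ρ = logb p₂⁻¹ p₁⁻¹ := by rw [hρ, logb_inv_base, logb_inv, neg_neg, log_div_log]
  have hAsub : A ⊆ S := hpart ▸ subset_union_left.trans subset_union_left
  have hBsub : B ⊆ S := hpart ▸ subset_union_right.trans subset_union_left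
  have hCsub : C ⊆ S := hpart ▸ subset_union_right
  have hfar : p₂ ^ k * n ≤ N := by
    have := le_pow_natCeil_logb hb (by positivity : 0 < n / N)
    rwa [← hk, inv_pow, div_le_iff₀ hN, le_inv_mul_iff₀ (by positivity)] at this
  have hlevel : (p₁ ^ k)⁻¹ ≤ p₁⁻¹ * (n / N) ^ ρ := by
    rw [← inv_pow, hk, hρ']
    exact pow_natCeil_logb_le (one_le_inv₀ hp₁0 |>.mpr hp₁.le) hb hnN
  have hsum : ∑ y ∈ S, q y ^ k ≤ N * 1 + #B * p₁ ^ k + #C * p₂ ^ k :=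
    sum_le_card_mul_add_of_union_eq hpart (fun y hy ↦ pow_nonneg (hq0 y hy) k)
      (fun y hy ↦ pow_le_one₀ (hq0 y (hAsub hy)) (hq1 y (hAsub hy)))
      (fun y hy ↦ pow_le_pow_left₀ (hq0 y (hBsub hy)) (hB y hy) k)
      (fun y hy ↦ pow_le_pow_left₀ (hq0 y (hCsub hy)) (hC y hy) k)
  have hfarC : #C * p₂ ^ k ≤ N := by
    have hCn : (#C : ℝ) ≤ n := Nat.cast_le.mpr (card_le_card hCsub)
    nlinarith [pow_pos hp₂ k]
  calc 1 / p₁ ^ k * (1 + ∑ y ∈ S, q y ^ k)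
      ≤ (p₁ ^ k)⁻¹ * (1 + 2 * N + #B * p₁ ^ k) := by
        rw [one_div]
        exact mul_le_mul_of_nonneg_left (by linarith) (by positivity)
    _ = (p₁ ^ k)⁻¹ * (1 + 2 * N) + #B := by field_simp
    _ ≤ 1 / p₁ * (n / N) ^ ρ * (1 + 2 * N) + #B := by
        rw [one_div]
        gcongr

/-- Choosing the level `k* = ⌈log(n/N) / log(1/p₂)⌉`, based only on the output size
`N = |A|`, the expected work `(1/p₁^{k*})·(1 + ∑_{y ∈ S} q(y)^{k*})` is at most
`(1/p₁)·(n/N)^ρ·(1 + 2N) + |B|`, where `S` is partitioned into near points `A`,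
`c`-near points `B` (with `q(y) ≤ p₁`) and far points `C` (with `q(y) ≤ p₂`), and
`ρ = log p₁ / log p₂`. -/
theorem output_sensitive_level_bound {α : Type*} [DecidableEq α]
    (p₁ p₂ : ℝ) (hp₂ : 0 < p₂) (hp₁₂ : p₂ < p₁) (hp₁ : p₁ < 1)
    (ρ : ℝ) (hρ : ρ = Real.log p₁ / Real.log p₂)
    (S A B C : Finset α) (q : α → ℝ)
    (hq0 : ∀ y ∈ S, 0 ≤ q y) (hq1 : ∀ y ∈ S, q y ≤ 1)
    (hpart : A ∪ B ∪ C = S)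
    (hAB : Disjoint A B) (hAC : Disjoint A C) (hBC : Disjoint B C)
    (hB : ∀ y ∈ B, q y ≤ p₁) (hC : ∀ y ∈ C, q y ≤ p₂)
    (hA : 1 ≤ A.card) (hAS : A.card ≤ S.card)
    (k : ℕ)
    (hk : k = ⌈Real.log ((S.card : ℝ) / (A.card : ℝ)) / Real.log (1 / p₂)⌉₊) :
    (1 / p₁ ^ k) * (1 + ∑ y ∈ S, q y ^ k) ≤
      (1 / p₁) * ((S.card : ℝ) / (A.card : ℝ)) ^ ρ * (1 + 2 * (A.card : ℝ))
        + (B.card : ℝ) :=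
  output_sensitive_level_bound_general p₁ p₂ hp₂ hp₁₂ hp₁ ρ hρ S A B C q hq0 hq1 hpart hB hC hA hAS
    k hk
end

section
/- Let R and S be finite disjoint sets with |R ∪ S| = n, let E ⊆ R × S be the set of near pairs and F ⊆ R × S be the set of c-near pairs, and for x ∈ R ∪ S let N_r(x) and N_{cr}(x) denote the number of pairs in E, respectively F, containing x. Let p₁, p₂ be reals with 0 < p₂ < p₁ < 1, let κ ≥ 1 be an integer, and let ℓ : R ∪ S → {1, …, κ} be a level assignment such that for every x with ℓ(x) < κ one has n·p₂^{ℓ(x)} ≤ N_r(x) ≤ n·p₂^{ℓ(x)−1}. For each i let OUT_{r,i} denote the number of pairs in E having at least one endpoint of level i, and let OUT_{cr} = |F|. Then Σ_{x ∈ R ∪ S} [ N_r(x)/p₁^{ℓ(x)} + N_{cr}(x) + n·(p₂/p₁)^{ℓ(x)} ] ≤ 4·Σ_{i=1}^κ OUT_{r,i}/p₁^i + 2·OUT_{cr} + n²·(p₂/p₁)^κ. -/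
/-- Double counting: the sum over points of a given level of their near-pair
degrees is at most twice the number of near pairs with an endpoint of that level. -/
lemma sum_deg_le_two_out {α : Type*} [DecidableEq α]
    (T : Finset α) (E : Finset (α × α)) (ℓ : α → ℕ) (i : ℕ)
    (hT : ∀ x ∈ T, ℓ x = i) :
    ∑ x ∈ T, (E.filter (fun e => e.1 = x ∨ e.2 = x)).card
      ≤ 2 * (E.filter (fun e => ℓ e.1 = i ∨ ℓ e.2 = i)).card := by
  have h1 : ∑ x ∈ T, (E.filter (fun e => e.1 = x ∨ e.2 = x)).card
      = ∑ e ∈ E, (T.filter (fun x => e.1 = x ∨ e.2 = x)).card := by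
    simp only [Finset.card_filter]
    exact Finset.sum_comm
  rw [h1]
  calc ∑ e ∈ E, (T.filter (fun x => e.1 = x ∨ e.2 = x)).card
      ≤ ∑ e ∈ E, (if ℓ e.1 = i ∨ ℓ e.2 = i then 2 else 0) := by
        apply Finset.sum_le_sum
        intro e _
        by_cases h : ℓ e.1 = i ∨ ℓ e.2 = i
        · rw [if_pos h]
          have hsub : T.filter (fun x => e.1 = x ∨ e.2 = x) ⊆ {e.1, e.2} := by
            intro x hx
            rcases (Finset.mem_filter.mp hx).2 with h' | h' <;>
              simp [← h']
          calc (T.filter (fun x => e.1 = x ∨ e.2 = x)).card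
              ≤ ({e.1, e.2} : Finset α).card := Finset.card_le_card hsub
            _ ≤ 2 := (Finset.card_insert_le _ _).trans (by simp)
        · rw [if_neg h]
          have : T.filter (fun x => e.1 = x ∨ e.2 = x) = ∅ := by
            rw [Finset.filter_eq_empty_iff]
            intro x hx hor
            rcases hor with h' | h'
            · exact h (Or.inl (h' ▸ hT x hx))
            · exact h (Or.inr (h' ▸ hT x hx))
          simp [this]
    _ = 2 * (E.filter (fun e => ℓ e.1 = i ∨ ℓ e.2 = i)).card := by
        rw [Finset.sum_ite, Finset.sum_const, Finset.sum_const]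
        simp [mul_comm]

/-- Core inequality in the load bound: if every point `x` of level `ℓ(x) < κ` is
`ℓ(x)`-dense, i.e. `n·p₂^{ℓ(x)} ≤ N_r(x) ≤ n·p₂^{ℓ(x)-1}`, then the total expected
work `∑_{x ∈ R ∪ S} (N_r(x)/p₁^{ℓ(x)} + N_{cr}(x) + n·(p₂/p₁)^{ℓ(x)})` is at most
`4·∑_{i=1}^κ OUT_{r,i}/p₁^i + 2·OUT_{cr} + n²·(p₂/p₁)^κ`. -/
theorem total_work_aggregation {α : Type*} [DecidableEq α]
    (R S : Finset α) (hRS : Disjoint R S)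
    (E F : Finset (α × α)) (hE : E ⊆ R ×ˢ S) (hF : F ⊆ R ×ˢ S)
    (p₁ p₂ : ℝ) (hp₂ : 0 < p₂) (hp₁₂ : p₂ < p₁) (hp₁ : p₁ < 1)
    (n : ℕ) (hn : (R ∪ S).card = n)
    (κ : ℕ) (hκ : 1 ≤ κ)
    (ℓ : α → ℕ) (hℓ : ∀ x ∈ R ∪ S, 1 ≤ ℓ x ∧ ℓ x ≤ κ)
    (hdense : ∀ x ∈ R ∪ S, ℓ x < κ →
      (n : ℝ) * p₂ ^ ℓ x ≤ ((E.filter (fun e => e.1 = x ∨ e.2 = x)).card : ℝ) ∧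
      ((E.filter (fun e => e.1 = x ∨ e.2 = x)).card : ℝ) ≤ (n : ℝ) * p₂ ^ (ℓ x - 1)) :
    ∑ x ∈ R ∪ S,
        (((E.filter (fun e => e.1 = x ∨ e.2 = x)).card : ℝ) / p₁ ^ ℓ x
          + ((F.filter (fun e => e.1 = x ∨ e.2 = x)).card : ℝ)
          + (n : ℝ) * (p₂ / p₁) ^ ℓ x) ≤
      4 * ∑ i ∈ Finset.Icc 1 κ,
          ((E.filter (fun e => ℓ e.1 = i ∨ ℓ e.2 = i)).card : ℝ) / p₁ ^ i
        + 2 * (F.card : ℝ) + (n : ℝ) ^ 2 * (p₂ / p₁) ^ κ := by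
  have hp1pos : 0 < p₁ := hp₂.trans hp₁₂
  have hratio : (0:ℝ) ≤ p₂ / p₁ := (div_pos hp₂ hp1pos).le
  set P : ℝ := ∑ i ∈ Finset.Icc 1 κ,
      ((E.filter (fun e => ℓ e.1 = i ∨ ℓ e.2 = i)).card : ℝ) / p₁ ^ i with hP
  -- Part A: ∑ N_r(x)/p₁^{ℓ x} ≤ 2 P
  have hA : ∑ x ∈ R ∪ S,
      ((E.filter (fun e => e.1 = x ∨ e.2 = x)).card : ℝ) / p₁ ^ ℓ x ≤ 2 * P := by
    have hfib := Finset.sum_fiberwise_of_maps_to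
      (g := ℓ) (t := Finset.Icc 1 κ)
      (f := fun x => ((E.filter (fun e => e.1 = x ∨ e.2 = x)).card : ℝ) / p₁ ^ ℓ x)
      (fun x hx => Finset.mem_Icc.mpr ⟨(hℓ x hx).1, (hℓ x hx).2⟩)
    rw [← hfib, hP, Finset.mul_sum]
    apply Finset.sum_le_sum
    intro i _
    have heq : ∑ x ∈ (R ∪ S).filter (fun x => ℓ x = i),
        ((E.filter (fun e => e.1 = x ∨ e.2 = x)).card : ℝ) / p₁ ^ ℓ x
        = (↑(∑ x ∈ (R ∪ S).filter (fun x => ℓ x = i),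
            (E.filter (fun e => e.1 = x ∨ e.2 = x)).card) : ℝ) / p₁ ^ i := by
      push_cast
      rw [Finset.sum_div]
      apply Finset.sum_congr rfl
      intro x hx
      rw [(Finset.mem_filter.mp hx).2]
    rw [heq, ← mul_div_assoc]
    have hnum := sum_deg_le_two_out ((R ∪ S).filter (fun x => ℓ x = i)) E ℓ i
      (fun x hx => (Finset.mem_filter.mp hx).2)
    gcongr
    exact_mod_cast hnum
  -- Part B: ∑ N_cr(x) ≤ 2 |F|
  have hB : ∑ x ∈ R ∪ S,
      ((F.filter (fun e => e.1 = x ∨ e.2 = x)).card : ℝ) ≤ 2 * (F.card : ℝ) := by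
    have hnat : ∑ x ∈ R ∪ S, (F.filter (fun e => e.1 = x ∨ e.2 = x)).card
        ≤ 2 * F.card := by
      have h1 : ∑ x ∈ R ∪ S, (F.filter (fun e => e.1 = x ∨ e.2 = x)).card
          = ∑ e ∈ F, ((R ∪ S).filter (fun x => e.1 = x ∨ e.2 = x)).card := by
        simp only [Finset.card_filter]
        exact Finset.sum_comm
      rw [h1]
      calc ∑ e ∈ F, ((R ∪ S).filter (fun x => e.1 = x ∨ e.2 = x)).card
          ≤ ∑ _e ∈ F, 2 := by
            apply Finset.sum_le_sum
            intro e _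
            have hsub : (R ∪ S).filter (fun x => e.1 = x ∨ e.2 = x) ⊆ {e.1, e.2} := by
              intro x hx
              rcases (Finset.mem_filter.mp hx).2 with h' | h' <;> simp [← h']
            calc ((R ∪ S).filter (fun x => e.1 = x ∨ e.2 = x)).card
                ≤ ({e.1, e.2} : Finset α).card := Finset.card_le_card hsub
              _ ≤ 2 := (Finset.card_insert_le _ _).trans (by simp)
        _ = 2 * F.card := by rw [Finset.sum_const]; ring
    exact_mod_cast hnat
  -- Part C: ∑ n (p₂/p₁)^{ℓ x} ≤ ∑ N_r(x)/p₁^{ℓ x} + n² (p₂/p₁)^κ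
  have hC : ∑ x ∈ R ∪ S, (n : ℝ) * (p₂ / p₁) ^ ℓ x
      ≤ (∑ x ∈ R ∪ S,
          ((E.filter (fun e => e.1 = x ∨ e.2 = x)).card : ℝ) / p₁ ^ ℓ x)
        + (n : ℝ) ^ 2 * (p₂ / p₁) ^ κ := by
    have hpt : ∀ x ∈ R ∪ S, (n : ℝ) * (p₂ / p₁) ^ ℓ x
        ≤ ((E.filter (fun e => e.1 = x ∨ e.2 = x)).card : ℝ) / p₁ ^ ℓ x
          + (n : ℝ) * (p₂ / p₁) ^ κ := by
      intro x hx
      by_cases hlt : ℓ x < κ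
      · have hd := (hdense x hx hlt).1
        have h1 : (n : ℝ) * (p₂ / p₁) ^ ℓ x
            ≤ ((E.filter (fun e => e.1 = x ∨ e.2 = x)).card : ℝ) / p₁ ^ ℓ x := by
          rw [div_pow, ← mul_div_assoc]
          gcongr
        have h2 : (0:ℝ) ≤ (n : ℝ) * (p₂ / p₁) ^ κ :=
          mul_nonneg (Nat.cast_nonneg n) (pow_nonneg hratio _)
        linarith
      · have heq : ℓ x = κ := le_antisymm (hℓ x hx).2 (not_lt.mp hlt)
        have h1 : (0:ℝ) ≤ ((E.filter (fun e => e.1 = x ∨ e.2 = x)).card : ℝ)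
            / p₁ ^ ℓ x :=
          div_nonneg (Nat.cast_nonneg _) (pow_pos hp1pos _).le
        rw [heq] at h1 ⊢
        linarith
    calc ∑ x ∈ R ∪ S, (n : ℝ) * (p₂ / p₁) ^ ℓ x
        ≤ ∑ x ∈ R ∪ S,
            (((E.filter (fun e => e.1 = x ∨ e.2 = x)).card : ℝ) / p₁ ^ ℓ x
              + (n : ℝ) * (p₂ / p₁) ^ κ) := Finset.sum_le_sum hpt
      _ = (∑ x ∈ R ∪ S,
            ((E.filter (fun e => e.1 = x ∨ e.2 = x)).card : ℝ) / p₁ ^ ℓ x)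
          + (n : ℝ) ^ 2 * (p₂ / p₁) ^ κ := by
          rw [Finset.sum_add_distrib, Finset.sum_const, hn]
          ring
  have hsplit : ∑ x ∈ R ∪ S,
      (((E.filter (fun e => e.1 = x ∨ e.2 = x)).card : ℝ) / p₁ ^ ℓ x
        + ((F.filter (fun e => e.1 = x ∨ e.2 = x)).card : ℝ)
        + (n : ℝ) * (p₂ / p₁) ^ ℓ x)
      = (∑ x ∈ R ∪ S,
          ((E.filter (fun e => e.1 = x ∨ e.2 = x)).card : ℝ) / p₁ ^ ℓ x)
        + (∑ x ∈ R ∪ S,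
          ((F.filter (fun e => e.1 = x ∨ e.2 = x)).card : ℝ))
        + ∑ x ∈ R ∪ S, (n : ℝ) * (p₂ / p₁) ^ ℓ x := by
    rw [Finset.sum_add_distrib, Finset.sum_add_distrib]
  rw [hsplit]
  linarith
end
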